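/- Let 1 ≤ k < n, κ_1 < … < κ_n real, c_1, …, c_n real, A a totally nonnegative real k×n matrix of rank k, and let w_1(x), …, w_k(x) be the Darboux coefficients. For v ∈ ℝ^n set h_v(x) = Σ_{j=1}^n v_j e^{κ_j x + c_j} and Ψ_v(x) = h_v^{(k)}(x) − Σ_{s=1}^k w_s(x) h_v^{(k−s)}(x). Then either Ψ_v vanishes identically on ℝ, or the zero set { x ∈ ℝ : Ψ_v(x) = 0 } is finite; in the latter case there exists x_0 such that Ψ_v(x) ≠ 0 for all x > x_0. -/

import Mathlib

/-!
Border the Wronskian matrix of `f₁, …, f_k` with the row of derivatives of `h`. By the Darboux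
relation, subtracting `∑ₛ wₛ · (column k-1-s)` from its last column leaves `Ψ` in the corner and
zeros above it, so the bordered Wronskian is `Ψ · Wr(f₁, …, f_k)`. Both Wronskians factor as
`B · E(x)` with `E(x)_{jl} = κⱼ^l e^{κⱼ x + cⱼ}`, so by Cauchy–Binet they are exponential sums
`∑_I Δ_I(B) V(κ_I) e^{∑_{j∈I} (κⱼ x + cⱼ)}` with positive Vandermonde factors `V(κ_I)`. For
`B = A`, total nonnegativity and rank `k` make this positive, so `Ψ` has the zeros of an
exponential sum. Unless it vanishes identically, such a sum is dominated at `±∞` by its extreme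
exponents, so its zeros lie in a compact set, where, being analytic, it has only finitely many.
-/

open scoped BigOperators

/-- The `k × k` maximal minor of a real `k × n` matrix `A` on the set of columns `I`
(defined to be `0` when `I` does not have exactly `k` elements). -/
noncomputable def maxMinor {k n : ℕ} (A : Matrix (Fin k) (Fin n) ℝ)
    (I : Finset (Fin n)) : ℝ :=
  if h : I.card = k then
    (A.submatrix id fun j => ((I.orderIsoOfFin h) j : Fin n)).det
  else 0

open Filter Topology Finset Function Real
open scoped Matrix

section ExpSum

theorem eventually_sum_mul_exp_ne_zero_atTop_of_coeff_ne_zero (T : Finset ℝ) (b : ℝ → ℝ)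
    (hb : ∃ μ ∈ T, b μ ≠ 0) : ∀ᶠ x in atTop, ∑ μ ∈ T, b μ * exp (μ * x) ≠ 0 := by
  set S := T.filter (b · ≠ 0)
  have hS : S.Nonempty := by simpa [S, filter_nonempty_iff] using hb
  set μ₀ := S.max' hS
  have hμ₀ : b μ₀ ≠ 0 := (mem_filter.1 (S.max'_mem hS)).2
  have hsum : ∀ x, ∑ μ ∈ T, b μ * exp (μ * x) = ∑ μ ∈ S, b μ * exp (μ * x) := fun x =>
    (sum_filter_of_ne fun μ _ h => left_ne_zero_of_mul h).symm
  -- after dividing by `exp (μ₀ * x)`, every term but the leading one tends to `0`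
  have hlim : Tendsto (fun x => exp (-(μ₀ * x)) * ∑ μ ∈ S, b μ * exp (μ * x)) atTop
      (𝓝 (b μ₀)) := by
    simp_rw [mul_sum]
    rw [show b μ₀ = ∑ μ ∈ S, if μ = μ₀ then b μ else 0 by
      rw [sum_ite_eq', if_pos (S.max'_mem hS)]]
    refine tendsto_finsetSum _ fun μ hμ => ?_
    have hterm : ∀ x, exp (-(μ₀ * x)) * (b μ * exp (μ * x)) = b μ * exp ((μ - μ₀) * x) := by
      intro x
      rw [mul_left_comm, ← exp_add]
      ring_nf
    simp_rw [hterm]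
    split_ifs with h
    · simp [h]
    · have hlt : μ - μ₀ < 0 := sub_neg.2 ((S.le_max' μ hμ).lt_of_ne h)
      simpa using
        (tendsto_exp_atBot.comp (tendsto_id.const_mul_atTop_of_neg hlt)).const_mul (b μ)
  filter_upwards [hlim.eventually_ne hμ₀] with x hx
  rw [hsum]
  exact right_ne_zero_of_mul hx

variable {ι : Type*} (s : Finset ι) (a μ : ι → ℝ)

theorem eventually_sum_mul_exp_ne_zero_atTop (hF : ∃ x, ∑ i ∈ s, a i * exp (μ i * x) ≠ 0) :
    ∀ᶠ x in atTop, ∑ i ∈ s, a i * exp (μ i * x) ≠ 0 := by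
  have hgroup : ∀ x, ∑ i ∈ s, a i * exp (μ i * x)
      = ∑ ν ∈ s.image μ, (∑ i ∈ s with μ i = ν, a i) * exp (ν * x) := by
    intro x
    rw [← sum_fiberwise_of_maps_to (fun i hi => mem_image_of_mem μ hi)]
    refine sum_congr rfl fun ν _ => ?_
    rw [sum_mul]
    exact sum_congr rfl fun i hi => by rw [(mem_filter.1 hi).2]
  simp_rw [hgroup] at hF ⊢
  refine eventually_sum_mul_exp_ne_zero_atTop_of_coeff_ne_zero _ _ ?_
  by_contra! h
  obtain ⟨x, hx⟩ := hF
  exact hx (sum_eq_zero fun ν hν => by rw [h ν hν, zero_mul])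

theorem eventually_sum_mul_exp_ne_zero_atBot (hF : ∃ x, ∑ i ∈ s, a i * exp (μ i * x) ≠ 0) :
    ∀ᶠ x in atBot, ∑ i ∈ s, a i * exp (μ i * x) ≠ 0 := by
  have hreflect : ∀ x, ∑ i ∈ s, a i * exp (-μ i * -x) = ∑ i ∈ s, a i * exp (μ i * x) := by
    simp
  obtain ⟨x, hx⟩ := hF
  have := eventually_sum_mul_exp_ne_zero_atTop s a (-μ) ⟨-x, by rwa [Pi.neg_def, hreflect]⟩
  simpa only [Pi.neg_apply, hreflect] using tendsto_neg_atBot_atTop.eventually this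

theorem AnalyticOnNhd.finite_setOf_eq_zero {𝕜 E : Type*} [NontriviallyNormedField 𝕜]
    [PreconnectedSpace 𝕜] [NormedAddCommGroup E] [NormedSpace 𝕜 E] {f : 𝕜 → E}
    (hf : AnalyticOnNhd 𝕜 f Set.univ) (hne : ∃ x, f x ≠ 0)
    (hcocompact : ∀ᶠ x in cocompact 𝕜, f x ≠ 0) : {x | f x = 0}.Finite := by
  obtain ⟨K, hK, hKc⟩ := mem_cocompact.1 hcocompact
  rcases hf.eqOn_zero_or_eventually_ne_zero_of_preconnected isPreconnected_univ with h | h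
  · obtain ⟨x, hx⟩ := hne
    exact absurd (h (Set.mem_univ x)) hx
  · refine (hK.finite_sdiff_of_mem_codiscreteWithin
      (codiscreteWithin_mono (Set.subset_univ K) h)).subset fun x hx => ⟨?_, fun h => h hx⟩
    by_contra hxK
    exact hKc hxK hx

theorem finite_setOf_sum_mul_exp_eq_zero (hF : ∃ x, ∑ i ∈ s, a i * exp (μ i * x) ≠ 0) :
    {x | ∑ i ∈ s, a i * exp (μ i * x) = 0}.Finite := by
  refine AnalyticOnNhd.finite_setOf_eq_zero (fun x _ => by fun_prop) hF ?_
  rw [cocompact_eq_atBot_atTop]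
  exact eventually_sup.2 ⟨eventually_sum_mul_exp_ne_zero_atBot s a μ hF,
    eventually_sum_mul_exp_ne_zero_atTop s a μ hF⟩

end ExpSum

section OrderEmbOfFin

variable {α : Type*} [LinearOrder α] {k : ℕ}

theorem Function.Injective.exists_eq_orderEmbOfFin_comp_perm {g : Fin k → α} (hg : Injective g) :
    ∃ (I : {I : Finset α // I.card = k}) (σ : Equiv.Perm (Fin k)),
      g = I.1.orderEmbOfFin I.2 ∘ σ := by
  have hcard : (univ.image g).card = k := by
    rw [card_image_of_injective _ hg, card_univ, Fintype.card_fin]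
  have hsorted : g ∘ Tuple.sort g = (univ.image g).orderEmbOfFin hcard :=
    orderEmbOfFin_unique hcard (fun i => mem_image_of_mem g (mem_univ _))
      ((Tuple.monotone_sort g).strictMono_of_injective (hg.comp (Equiv.injective _)))
  refine ⟨⟨_, hcard⟩, (Tuple.sort g).symm, ?_⟩
  rw [← hsorted, comp_assoc, Equiv.self_comp_symm, comp_id]

theorem injective_orderEmbOfFin_comp_perm :
    Injective fun Iσ : {I : Finset α // I.card = k} × Equiv.Perm (Fin k) =>
      Iσ.1.1.orderEmbOfFin Iσ.1.2 ∘ Iσ.2 := by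
  rintro ⟨I, σ⟩ ⟨J, τ⟩ hIJ
  have hrange := congrArg Set.range hIJ
  simp only [EquivLike.range_comp, range_orderEmbOfFin, coe_inj] at hrange
  obtain rfl : I = J := Subtype.ext hrange
  exact Prod.ext rfl (Equiv.ext fun i => (I.1.orderEmbOfFin I.2).injective (congrFun hIJ i))

end OrderEmbOfFin

namespace Matrix

variable {R : Type*} [CommRing R]

theorem det_vandermonde_pos [LinearOrder R] [IsStrictOrderedRing R] {m : ℕ} {v : Fin m → R}
    (hv : StrictMono v) : 0 < (vandermonde v).det := by
  rw [det_vandermonde]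
  exact prod_pos fun i _ => prod_pos fun j hj => sub_pos.2 (hv (mem_Ioi.1 hj))

theorem det_eq_mul_det_submatrix_castSucc {k : ℕ} (M : Matrix (Fin (k + 1)) (Fin (k + 1)) R)
    (a : Fin k → R) (ψ : R)
    (hM : ∀ i : Fin k, M i.castSucc (Fin.last k) = ∑ s, a s * M i.castSucc s.castSucc)
    (hψ : M (Fin.last k) (Fin.last k) = ψ + ∑ s, a s * M (Fin.last k) s.castSucc) :
    M.det = ψ * (M.submatrix Fin.castSucc Fin.castSucc).det := by
  set M' := M.updateCol (Fin.last k) (Pi.single (Fin.last k) ψ)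
  have hM' : M = M'.updateCol (Fin.last k)
      (fun r => ∑ i, (Fin.snoc a 1 : Fin (k + 1) → R) i • M' r i) := by
    ext r j
    rcases eq_or_ne j (Fin.last k) with rfl | hj
    · simp only [updateCol_self, Fin.sum_univ_castSucc, Fin.snoc_castSucc, Fin.snoc_last, M',
        updateCol_ne (Fin.castSucc_lt_last _).ne, smul_eq_mul, one_mul]
      induction r using Fin.lastCases with
      | last => rw [hψ, Pi.single_eq_same, add_comm]
      | cast i => rw [hM, Pi.single_eq_of_ne (Fin.castSucc_lt_last i).ne, add_zero]
    · simp [M', hj]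
  have hM'det : M'.det = ψ * (M.submatrix Fin.castSucc Fin.castSucc).det := by
    rw [det_succ_column M' (Fin.last k), sum_eq_single (Fin.last k)]
    · simp only [M', updateCol_self, Pi.single_eq_same, Fin.succAbove_last, ← two_mul,
        pow_mul, neg_one_sq, one_pow, one_mul]
      congr 2
      ext i j
      simp
    · intro i _ hi
      simp [M', Pi.single_eq_of_ne hi]
    · simp
  nth_rewrite 1 [hM']
  rw [det_updateCol_sum, Fin.snoc_last, one_smul, hM'det]

theorem det_mul_eq_sum_prod_mul_det_submatrix {m n : Type*} [Fintype m] [DecidableEq m]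
    [Fintype n] (B : Matrix m n R) (C : Matrix n m R) :
    (B * C).det = ∑ g : m → n, (∏ i, B i (g i)) * (C.submatrix g id).det := by
  have hrows : (B * C : m → m → R) = fun i => ∑ j, B i j • C j := by
    ext i l
    simp [mul_apply]
  change (detRowAlternating : (m → R) [⋀^m]→ₗ[R] R).toMultilinearMap (B * C : m → m → R) = _
  rw [hrows, MultilinearMap.map_sum]
  refine sum_congr rfl fun g _ => ?_
  rw [MultilinearMap.map_smul_univ, smul_eq_mul]
  rfl

/-- The Cauchy–Binet formula. -/
theorem det_mul_eq_sum_det_submatrix_mul_det_submatrix {k n : ℕ}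
    (B : Matrix (Fin k) (Fin n) R) (C : Matrix (Fin n) (Fin k) R) :
    (B * C).det = ∑ I : {I : Finset (Fin n) // I.card = k},
      (B.submatrix id (I.1.orderEmbOfFin I.2)).det
        * (C.submatrix (I.1.orderEmbOfFin I.2) id).det := by
  set e : {I : Finset (Fin n) // I.card = k} → Fin k ↪o Fin n := fun I => I.1.orderEmbOfFin I.2
  have hperm : ∀ I (σ : Equiv.Perm (Fin k)),
      (C.submatrix (e I ∘ σ) id).det = Equiv.Perm.sign σ * (C.submatrix (e I) id).det := by
    intro I σ
    rw [← det_permute, submatrix_submatrix]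
    rfl
  calc (B * C).det = ∑ g : Fin k → Fin n, (∏ i, B i (g i)) * (C.submatrix g id).det :=
        det_mul_eq_sum_prod_mul_det_submatrix B C
    _ = ∑ Iσ : {I : Finset (Fin n) // I.card = k} × Equiv.Perm (Fin k),
          (∏ i, B i (e Iσ.1 (Iσ.2 i))) * (C.submatrix (e Iσ.1 ∘ Iσ.2) id).det := by
        refine (sum_of_injOn _ injective_orderEmbOfFin_comp_perm.injOn
          (fun _ _ => mem_univ _) (fun g _ hg => ?_) (fun _ _ => rfl)).symm
        have hg : ¬ Injective g := fun hinj => by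
          obtain ⟨I, σ, rfl⟩ := hinj.exists_eq_orderEmbOfFin_comp_perm
          exact hg ⟨(I, σ), mem_coe.2 (mem_univ _), rfl⟩
        obtain ⟨i, j, hij, hne⟩ := not_injective_iff.1 hg
        rw [det_zero_of_row_eq hne (by ext l; simp [hij]), mul_zero]
    _ = _ := by
        rw [Fintype.sum_prod_type]
        refine sum_congr rfl fun I _ => ?_
        simp_rw [hperm, ← mul_assoc, ← sum_mul, ← det_transpose (B.submatrix _ _), det_apply]
        congr 1
        refine sum_congr rfl fun σ _ => ?_
        simp [Units.smul_def, e, mul_comm]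

theorem det_ne_zero_of_rank_eq_card {K m : Type*} [Field K] [Fintype m] [DecidableEq m]
    {M : Matrix m m K} (h : M.rank = Fintype.card m) : M.det ≠ 0 := by
  have hrange : LinearMap.range M.mulVecLin = ⊤ :=
    Submodule.eq_top_of_finrank_eq (by rw [← rank, h, Module.finrank_fintype_fun_eq_card])
  have hunit : IsUnit M := mulVec_surjective_iff_isUnit.1 (LinearMap.range_eq_top.1 hrange)
  exact ((isUnit_iff_isUnit_det M).1 hunit).ne_zero

end Matrix

section MaxMinor

variable {k n : ℕ}

theorem maxMinor_eq_det_submatrix (A : Matrix (Fin k) (Fin n) ℝ) {I : Finset (Fin n)}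
    (h : I.card = k) : maxMinor A I = (A.submatrix id (I.orderEmbOfFin h)).det := by
  simp [maxMinor, h]

theorem det_mul_pos_of_maxMinor_nonneg (B : Matrix (Fin k) (Fin n) ℝ)
    (C : Matrix (Fin n) (Fin k) ℝ) (hB : ∀ I : Finset (Fin n), I.card = k → 0 ≤ maxMinor B I)
    (hB' : ∃ I : Finset (Fin n), I.card = k ∧ maxMinor B I ≠ 0)
    (hC : ∀ e : Fin k ↪o Fin n, 0 < (C.submatrix e id).det) : 0 < (B * C).det := by
  rw [Matrix.det_mul_eq_sum_det_submatrix_mul_det_submatrix]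
  obtain ⟨I, hI, hne⟩ := hB'
  refine sum_pos' (fun J _ => ?_) ⟨⟨I, hI⟩, mem_univ _, ?_⟩
  · rw [← maxMinor_eq_det_submatrix]
    exact mul_nonneg (hB _ J.2) (hC _).le
  · rw [← maxMinor_eq_det_submatrix]
    exact mul_pos ((hB I hI).lt_of_ne' hne) (hC _)

theorem exists_maxMinor_ne_zero_of_rank_eq (A : Matrix (Fin k) (Fin n) ℝ) (hrank : A.rank = k) :
    ∃ I : Finset (Fin n), I.card = k ∧ maxMinor A I ≠ 0 := by
  have hdet : (A * Aᵀ).det ≠ 0 := Matrix.det_ne_zero_of_rank_eq_card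
    (by rw [Matrix.rank_self_mul_transpose, hrank, Fintype.card_fin])
  by_contra! h
  rw [Matrix.det_mul_eq_sum_det_submatrix_mul_det_submatrix] at hdet
  exact hdet (sum_eq_zero fun I _ => by rw [← maxMinor_eq_det_submatrix, h I I.2, zero_mul])

end MaxMinor

section Wronskian

noncomputable def wronskianMatrix {m : ℕ} (F : Fin m → ℝ → ℝ) (x : ℝ) :
    Matrix (Fin m) (Fin m) ℝ :=
  Matrix.of fun i l => iteratedDeriv l (F i) x

noncomputable def expDerivMatrix {n : ℕ} (m : ℕ) (κ c : Fin n → ℝ) (x : ℝ) :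
    Matrix (Fin n) (Fin m) ℝ :=
  Matrix.of fun j l => κ j ^ (l : ℕ) * exp (κ j * x + c j)

variable {n : ℕ} (κ c : Fin n → ℝ)

theorem iteratedDeriv_sum_mul_exp (a : Fin n → ℝ) (l : ℕ) (x : ℝ) :
    iteratedDeriv l (fun x => ∑ j, a j * exp (κ j * x + c j)) x
      = ∑ j, a j * κ j ^ l * exp (κ j * x + c j) := by
  have hexp : ∀ j, (fun x => a j * exp (κ j * x + c j))
      = fun x => (a j * exp (c j)) * exp (κ j * x) := by
    intro j
    ext x
    rw [exp_add]
    ring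
  rw [iteratedDeriv_fun_sum (fun j _ => by fun_prop)]
  refine sum_congr rfl fun j _ => ?_
  rw [hexp, iteratedDeriv_const_mul_field, iteratedDeriv_exp_const_mul, exp_add]
  ring

theorem wronskianMatrix_eq_mul_expDerivMatrix {m : ℕ} (B : Matrix (Fin m) (Fin n) ℝ)
    (F : Fin m → ℝ → ℝ) (hF : ∀ i x, F i x = ∑ j, B i j * exp (κ j * x + c j)) (x : ℝ) :
    wronskianMatrix F x = B * expDerivMatrix m κ c x := by
  ext i l
  simp only [wronskianMatrix, expDerivMatrix, Matrix.of_apply, Matrix.mul_apply,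
    funext (hF i), iteratedDeriv_sum_mul_exp, mul_assoc]

theorem det_expDerivMatrix_submatrix {m : ℕ} (x : ℝ) (e : Fin m → Fin n) :
    ((expDerivMatrix m κ c x).submatrix e id).det
      = (Matrix.vandermonde (κ ∘ e)).det * exp (∑ l, c (e l)) * exp ((∑ l, κ (e l)) * x) := by
  have hfactor : (expDerivMatrix m κ c x).submatrix e id
      = Matrix.diagonal (fun l => exp (κ (e l) * x + c (e l))) * Matrix.vandermonde (κ ∘ e) := by
    ext i l
    simp [expDerivMatrix, Matrix.vandermonde, mul_comm]
  rw [hfactor, Matrix.det_mul, Matrix.det_diagonal, ← exp_sum, sum_add_distrib, exp_add, sum_mul]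
  ring

theorem det_mul_expDerivMatrix {m : ℕ} (B : Matrix (Fin m) (Fin n) ℝ) (x : ℝ) :
    (B * expDerivMatrix m κ c x).det = ∑ I : {I : Finset (Fin n) // I.card = m},
      maxMinor B I * (Matrix.vandermonde (κ ∘ I.1.orderEmbOfFin I.2)).det
        * exp (∑ l, c (I.1.orderEmbOfFin I.2 l))
        * exp ((∑ l, κ (I.1.orderEmbOfFin I.2 l)) * x) := by
  rw [Matrix.det_mul_eq_sum_det_submatrix_mul_det_submatrix]
  refine sum_congr rfl fun I _ => ?_
  rw [maxMinor_eq_det_submatrix B I.2, det_expDerivMatrix_submatrix]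
  ring

theorem det_wronskianMatrix_pos {k : ℕ} (hκ : StrictMono κ) (A : Matrix (Fin k) (Fin n) ℝ)
    (hrank : A.rank = k) (hTNN : ∀ I : Finset (Fin n), I.card = k → 0 ≤ maxMinor A I)
    (f : Fin k → ℝ → ℝ) (hf : ∀ i x, f i x = ∑ j, A i j * exp (κ j * x + c j)) (x : ℝ) :
    0 < (wronskianMatrix f x).det := by
  rw [wronskianMatrix_eq_mul_expDerivMatrix κ c A f hf]
  refine det_mul_pos_of_maxMinor_nonneg A _ hTNN (exists_maxMinor_ne_zero_of_rank_eq A hrank)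
    fun e => ?_
  rw [det_expDerivMatrix_submatrix]
  exact mul_pos (mul_pos (Matrix.det_vandermonde_pos (hκ.comp e.strictMono)) (exp_pos _))
    (exp_pos _)

theorem det_wronskianMatrix_snoc {k : ℕ} (f : Fin k → ℝ → ℝ) (h : ℝ → ℝ) (w : Fin k → ℝ)
    (x : ℝ)
    (hw : ∀ i, iteratedDeriv k (f i) x = ∑ s : Fin k, w s * iteratedDeriv (k - 1 - s) (f i) x) :
    (wronskianMatrix (Fin.snoc f h : Fin (k + 1) → ℝ → ℝ) x).det
      = (iteratedDeriv k h x - ∑ s : Fin k, w s * iteratedDeriv (k - 1 - s) h x)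
        * (wronskianMatrix f x).det := by
  have hrev : ∀ F : ℝ → ℝ, ∑ s : Fin k, w s * iteratedDeriv (k - 1 - s) F x
      = ∑ s : Fin k, w s.rev * iteratedDeriv s F x := fun F => by
    rw [← Equiv.sum_comp Fin.revPerm]
    refine sum_congr rfl fun s _ => ?_
    simp only [Fin.revPerm_apply, Fin.val_rev]
    congr 2
    omega
  have hsub : (wronskianMatrix (Fin.snoc f h : Fin (k + 1) → ℝ → ℝ) x).submatrix
      Fin.castSucc Fin.castSucc = wronskianMatrix f x := by
    ext i l
    simp [wronskianMatrix]
  rw [← hsub, hrev]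
  apply Matrix.det_eq_mul_det_submatrix_castSucc _ (fun s => w s.rev)
  · intro i
    simp [wronskianMatrix, hw, hrev]
  · simp [wronskianMatrix]

end Wronskian

theorem dressed_wave_function_zero_set_general
    (k n : ℕ)
    (κ c : Fin n → ℝ) (hκ : StrictMono κ)
    (A : Matrix (Fin k) (Fin n) ℝ) (hrank : A.rank = k)
    (hTNN : ∀ I : Finset (Fin n), I.card = k → 0 ≤ maxMinor A I)
    (f : Fin k → ℝ → ℝ)
    (hf : ∀ i x, f i x = ∑ j, A i j * Real.exp (κ j * x + c j))
    (w : Fin k → ℝ → ℝ)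
    (hw : ∀ x i, iteratedDeriv k (f i) x =
      ∑ s : Fin k, w s x * iteratedDeriv (k - 1 - (s : ℕ)) (f i) x)
    (v : Fin n → ℝ) (h Ψ : ℝ → ℝ)
    (hh : ∀ x, h x = ∑ j, v j * Real.exp (κ j * x + c j))
    (hΨ : ∀ x, Ψ x = iteratedDeriv k h x -
      ∑ s : Fin k, w s x * iteratedDeriv (k - 1 - (s : ℕ)) h x) :
    (∀ x, Ψ x = 0) ∨
      ({x : ℝ | Ψ x = 0}.Finite ∧ ∃ x₀ : ℝ, ∀ x, x₀ < x → Ψ x ≠ 0) := by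
  set B : Matrix (Fin (k + 1)) (Fin n) ℝ := Matrix.of (Fin.snoc (A ·) v)
  have hsnoc : ∀ i x, (Fin.snoc f h : Fin (k + 1) → ℝ → ℝ) i x
      = ∑ j, B i j * exp (κ j * x + c j) := by
    intro i x
    induction i using Fin.lastCases <;> simp [B, hf, hh]
  have hW := det_wronskianMatrix_pos κ c hκ A hrank hTNN f hf
  have hzero : ∀ x, Ψ x = 0 ↔ (B * expDerivMatrix (k + 1) κ c x).det = 0 := fun x => by
    rw [← wronskianMatrix_eq_mul_expDerivMatrix κ c B _ hsnoc,
      det_wronskianMatrix_snoc f h (w · x) x (hw x), ← hΨ, mul_eq_zero_iff_right (hW x).ne']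
  by_cases hvanish : ∀ x, Ψ x = 0
  · exact Or.inl hvanish
  obtain ⟨x₁, hx₁⟩ := not_forall.1 hvanish
  have hfin : {x | Ψ x = 0}.Finite := by
    simp_rw [hzero, det_mul_expDerivMatrix]
    refine finite_setOf_sum_mul_exp_eq_zero _ _ _ ⟨x₁, ?_⟩
    rwa [← det_mul_expDerivMatrix, ne_eq, ← hzero]
  obtain ⟨x₀, hx₀⟩ := hfin.bddAbove
  exact Or.inr ⟨hfin, x₀, fun x hx hΨx => hx.not_ge (hx₀ hΨx)⟩

/-- for TNN soliton data with Darboux coefficients `w`, the dressed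
wave function `Ψ_v` of any vector `v ∈ ℝⁿ` either vanishes identically on `ℝ`, or
has a finite zero set — in which case it is nonzero for all sufficiently large `x`. -/
theorem dressed_wave_function_zero_set
    (k n : ℕ) (hk : 1 ≤ k) (hkn : k < n)
    (κ c : Fin n → ℝ) (hκ : StrictMono κ)
    (A : Matrix (Fin k) (Fin n) ℝ) (hrank : A.rank = k)
    (hTNN : ∀ I : Finset (Fin n), I.card = k → 0 ≤ maxMinor A I)
    (f : Fin k → ℝ → ℝ)
    (hf : ∀ i x, f i x = ∑ j, A i j * Real.exp (κ j * x + c j))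
    (w : Fin k → ℝ → ℝ)
    (hw : ∀ x i, iteratedDeriv k (f i) x =
      ∑ s : Fin k, w s x * iteratedDeriv (k - 1 - (s : ℕ)) (f i) x)
    (v : Fin n → ℝ) (h Ψ : ℝ → ℝ)
    (hh : ∀ x, h x = ∑ j, v j * Real.exp (κ j * x + c j))
    (hΨ : ∀ x, Ψ x = iteratedDeriv k h x -
      ∑ s : Fin k, w s x * iteratedDeriv (k - 1 - (s : ℕ)) h x) :
    (∀ x, Ψ x = 0) ∨
      ({x : ℝ | Ψ x = 0}.Finite ∧ ∃ x₀ : ℝ, ∀ x, x₀ < x → Ψ x ≠ 0) :=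
  dressed_wave_function_zero_set_general k n κ c hκ A hrank hTNN f hf w hw v h Ψ hh hΨ
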